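/- A number n = (a, b, c, d) (as a 4-digit string) with a + d = 10, b + c = 8, and a ≥ b + 1 is in the image of the 4-digit Kaprekar map K; specifically, any m with parameters (α, β) = (a, b+1) satisfies K(m) = n. -/

import Mathlib

/-- The decimal digits of `n` (little-endian), padded with zeros to length `w`. -/
def padDigits (w n : ℕ) : List ℕ := (Nat.digits 10 n ++ List.replicate w 0).take w

/-- The padded digits of `n` sorted ascending (little-endian), so that
`Nat.ofDigits 10 (sortedDigits w n)` is the descending arrangement `X` and
`Nat.ofDigits 10 (sortedDigits w n).reverse` is the ascending arrangement `Y`. -/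
def sortedDigits (w n : ℕ) : List ℕ := (padDigits w n).mergeSort (· ≤ ·)

/-- The Kaprekar map on `w`-digit numbers: descending arrangement minus ascending arrangement. -/
def kap (w n : ℕ) : ℕ :=
  Nat.ofDigits 10 (sortedDigits w n) - Nat.ofDigits 10 (sortedDigits w n).reverse

/-- All `w` (padded) digits of `n` are equal. -/
def allEqDigits (w n : ℕ) : Prop := ∃ d, padDigits w n = List.replicate w d

lemma length_sortedDigits (w n : ℕ) : (sortedDigits w n).length = w := by
  simp [sortedDigits, padDigits, List.length_mergeSort]

lemma pairwise_sortedDigits (w n : ℕ) : (sortedDigits w n).Pairwise (· ≤ ·) :=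
  List.pairwise_mergeSort' _ _

/-- `K(m) = 999 α + 90 β` in terms of the parameters `α = a₀ - d₀`, `β = b₀ - c₀` of `m`. -/
theorem kap_four_eq (m : ℕ) :
    kap 4 m = 999 * ((sortedDigits 4 m).getD 3 0 - (sortedDigits 4 m).getD 0 0)
      + 90 * ((sortedDigits 4 m).getD 2 0 - (sortedDigits 4 m).getD 1 0) := by
  have hsorted := pairwise_sortedDigits 4 m
  unfold kap
  match hL : sortedDigits 4 m, length_sortedDigits 4 m with
  | [e₀, e₁, e₂, e₃], _ =>
    rw [hL] at hsorted
    simp only [List.pairwise_cons, List.mem_cons, List.not_mem_nil, or_false,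
      forall_eq_or_imp, forall_eq, List.Pairwise.nil] at hsorted
    simp only [Nat.ofDigits_cons, Nat.ofDigits_nil, List.reverse_cons, List.reverse_nil,
      List.nil_append, List.cons_append, List.getD_cons_succ, List.getD_cons_zero]
    omega

theorem stmt9_general (a b c d m : ℕ)
    (h1 : a + d = 10) (h2 : b + c = 8)
    (hα : (sortedDigits 4 m).getD 3 0 - (sortedDigits 4 m).getD 0 0 = a)
    (hβ : (sortedDigits 4 m).getD 2 0 - (sortedDigits 4 m).getD 1 0 = b + 1) :
    kap 4 m = 1000 * a + 100 * b + 10 * c + d := by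
  rw [kap_four_eq, hα, hβ]
  omega

theorem stmt9 (a b c d m : ℕ)
    (ha : a ≤ 9) (hb : b ≤ 9) (hc : c ≤ 9) (hd : d ≤ 9)
    (h1 : a + d = 10) (h2 : b + c = 8) (h3 : b + 1 ≤ a)
    (hm0 : 0 < m) (hm1 : m < 10000) (hm2 : ¬ allEqDigits 4 m)
    (hα : (sortedDigits 4 m).getD 3 0 - (sortedDigits 4 m).getD 0 0 = a)
    (hβ : (sortedDigits 4 m).getD 2 0 - (sortedDigits 4 m).getD 1 0 = b + 1) :
    kap 4 m = 1000 * a + 100 * b + 10 * c + d :=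
  stmt9_general a b c d m h1 h2 hα hβ
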